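/- Let c = (√5−1)/2 and let Z* be the real symmetric 7×7 matrix (indexed 0,1,…,6) with Z*_{00} = √5; Z*_{0i} = −1 for i = 1,…,6; Z*_{ii} = 1 for i = 1,…,6; off-diagonal entries Z*_{13} = Z*_{14} = Z*_{16} = Z*_{24} = Z*_{25} = Z*_{26} = Z*_{35} = c, Z*_{46} = 1; and Z*_{ij} = 0 for the remaining pairs of distinct i, j ∈ {1,…,6}, namely {1,2},{1,5},{2,3},{3,4},{3,6},{4,5},{5,6}. Then Z* is positive semidefinite, Z*_{ii} = −(2 Z*_{0i} + 1) for all i ∈ {1,…,6}, and Z*_{ij} = 0 for every pair of distinct vertices i, j not adjacent in G₆; hence Z* is dual feasible for the Lovász theta SDP of G₆ with objective value Z*_{00} = √5. -/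

import Mathlib

/-- Adjacency in the graph `G₆` on the vertex set `{1, …, 6}` with edge set
`{ {1,3}, {1,4}, {1,6}, {2,4}, {2,5}, {2,6}, {3,5}, {4,6} }`. -/
def g6Adj (i j : ℕ) : Prop :=
  (i, j) ∈ [(1, 3), (1, 4), (1, 6), (2, 4), (2, 5), (2, 6), (3, 5), (4, 6)] ∨
    (j, i) ∈ [(1, 3), (1, 4), (1, 6), (2, 4), (2, 5), (2, 6), (3, 5), (4, 6)]

/-- The explicit dual optimal solution `Z*` of the Lovász theta SDP of `G₆`, with
`c = (√5 - 1)/2`. -/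
noncomputable def g6Zstar : Matrix (Fin 7) (Fin 7) ℝ :=
  let c : ℝ := (Real.sqrt 5 - 1) / 2
  !![Real.sqrt 5, -1, -1, -1, -1, -1, -1;
     -1, 1, 0, c, c, 0, c;
     -1, 0, 1, 0, c, c, c;
     -1, c, 0, 1, 0, c, 0;
     -1, c, c, 0, 1, 0, 1;
     -1, 0, c, c, 0, 1, 0;
     -1, c, c, 0, 1, 0, 1]

/-!
Merging the adjacent twins 4 and 6 of `G₆` leaves the 5-cycle 1–3–5–2–4, on which the vertex block
of `Z*` is `I + c • A(C₅)`, with eigenvalues `1 + 2c = √5`, `1 + c²` (twice) and `1 - c φ = 0`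
(twice, `φ = 1/c` the golden ratio). The `√5`-eigenvector combines with row 0 into a single
square, so `Z*` has rank 3; an `LDLᵀ` factorisation writes it as a nonnegative combination of
three matrices `v vᵀ`.
-/

open Matrix Real

lemma posSemidef_smul_vecMulVec_self {n : Type*} [Fintype n] {d : ℝ} (hd : 0 ≤ d) (v : n → ℝ) :
    (d • vecMulVec v v).PosSemidef := by
  simpa using (posSemidef_vecMulVec_self_star v).smul hd

theorem g6Zstar_eq_sum_smul_vecMulVec :
    g6Zstar =
      (√5 / 5) • vecMulVec ![√5, -1, -1, -1, -1, -1, -1] ![√5, -1, -1, -1, -1, -1, -1] +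
      ((5 - √5) / 20) •
        vecMulVec ![0, 2, -(1 + √5) / 2, (√5 - 1) / 2, (√5 - 1) / 2, -(1 + √5) / 2, (√5 - 1) / 2]
          ![0, 2, -(1 + √5) / 2, (√5 - 1) / 2, (√5 - 1) / 2, -(1 + √5) / 2, (√5 - 1) / 2] +
      ((3 - √5) / 4) •
        vecMulVec ![0, 0, 1, -(1 + √5) / 2, (1 + √5) / 2, -1, (1 + √5) / 2]
          ![0, 0, 1, -(1 + √5) / 2, (1 + √5) / 2, -1, (1 + √5) / 2] := by
  have hs : √5 ^ 2 = 5 := sq_sqrt (by norm_num)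
  ext i j
  fin_cases i <;> fin_cases j <;> simp [g6Zstar, vecMulVec] <;> grind

theorem g6Zstar_posSemidef : g6Zstar.PosSemidef := by
  have hs : √5 ^ 2 = 5 := sq_sqrt (by norm_num)
  have h3 : √5 ≤ 3 := by nlinarith [sqrt_nonneg 5]
  rw [g6Zstar_eq_sum_smul_vecMulVec]
  refine ((posSemidef_smul_vecMulVec_self ?_ _).add (posSemidef_smul_vecMulVec_self ?_ _)).add
    (posSemidef_smul_vecMulVec_self ?_ _) <;> linarith [sqrt_nonneg 5]

theorem g6Zstar_diag_eq (i : Fin 7) (hi : i.val ≠ 0) : g6Zstar i i = -(2 * g6Zstar 0 i + 1) := by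
  fin_cases i <;> simp_all [g6Zstar] <;> norm_num

theorem g6Zstar_eq_zero_of_not_adj (i j : Fin 7) (hi : i.val ≠ 0) (hj : j.val ≠ 0) (hij : i ≠ j)
    (hadj : ¬g6Adj i.val j.val) : g6Zstar i j = 0 := by
  fin_cases i <;> fin_cases j <;> simp_all [g6Adj, g6Zstar]

/-- `Z*` is positive semidefinite, satisfies `Z* i i = -(2 Z* 0 i + 1)` for `i ∈ {1, …, 6}`,
and `Z* i j = 0` for every pair of distinct vertices not adjacent in `G₆`; hence `Z*` is dual
feasible for the Lovász theta SDP of `G₆` with objective value `Z* 0 0 = √5`. -/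
theorem g6Zstar_dual_feasible :
    g6Zstar.PosSemidef ∧
    (∀ i : Fin 7, i.val ≠ 0 → g6Zstar i i = -(2 * g6Zstar 0 i + 1)) ∧
    (∀ i j : Fin 7, i.val ≠ 0 → j.val ≠ 0 → i ≠ j → ¬g6Adj i.val j.val → g6Zstar i j = 0) ∧
    g6Zstar 0 0 = Real.sqrt 5 :=
  ⟨g6Zstar_posSemidef, g6Zstar_diag_eq, g6Zstar_eq_zero_of_not_adj, rfl⟩
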